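/- arXiv:1401.6133 — 2 statements merged into one kernel-verified Lean document; each statement's English description precedes it below -/
import Mathlib

section
/- Let n ≥ 5 be an integer and s ∈ (0,2). Define Φ : ℝⁿ → ℝ by Φ(X) = (1 + |X|^{2-s})^{-(n-2)/(2-s)}. Then ∫_{ℝⁿ} |X|² |∇Φ|² dX / ∫_{ℝⁿ} Φ² dX = n(n-2)(n+2-s) / (2(2n-2-s)). -/
/-!
Both integrands are radial: `|X| |∇Φ| = (n-2) |X|^(2-s) (1+|X|^(2-s))^(-(n-s)/(2-s))`. Polar
coordinates followed by the substitution `t = r^(2-s)` turn the two integrals, up to the same factor,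
into Beta integrals of the second kind `B(a+2, b)` and `B(a, b)` with `a = n/(2-s)` and
`b = (n-4)/(2-s)`; these converge because `n ≥ 5`. Their ratio follows from the recurrence
`B(a+1, b) = a/(a+b) B(a, b)`, obtained by integrating `d/dt [t^a (1+t)^(-(a+b))]` over `(0, ∞)`.
-/

open Real MeasureTheory Set Filter Topology

noncomputable def betaSecondKind (a b : ℝ) : ℝ :=
  ∫ t in Ioi (0 : ℝ), t ^ (a - 1) * (1 + t) ^ (-(a + b))

section BetaSecondKind

variable {a b : ℝ}

theorem integrableOn_rpow_mul_one_add_rpow_neg (ha : 0 < a) (hb : 0 < b) :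
    IntegrableOn (fun t : ℝ => t ^ (a - 1) * (1 + t) ^ (-(a + b))) (Ioi 0) := by
  have hmeas : AEStronglyMeasurable (fun t : ℝ => t ^ (a - 1) * (1 + t) ^ (-(a + b))) volume := by
    fun_prop
  have near_zero : IntegrableOn (fun t : ℝ => t ^ (a - 1) * (1 + t) ^ (-(a + b))) (Ioc 0 1) := by
    have hpow : IntegrableOn (fun t : ℝ => t ^ (a - 1)) (Ioc 0 1) :=
      (intervalIntegrable_iff_integrableOn_Ioc_of_le zero_le_one).mp
        (intervalIntegral.intervalIntegrable_rpow' (by linarith))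
    refine hpow.mono' hmeas.restrict ?_
    filter_upwards [ae_restrict_mem measurableSet_Ioc] with t ⟨ht, _⟩
    rw [norm_of_nonneg (by positivity)]
    exact mul_le_of_le_one_right (by positivity)
      (rpow_le_one_of_one_le_of_nonpos (by linarith) (by linarith))
  have near_top : IntegrableOn (fun t : ℝ => t ^ (a - 1) * (1 + t) ^ (-(a + b))) (Ioi 1) := by
    have hpow : IntegrableOn (fun t : ℝ => t ^ (-b - 1)) (Ioi 1) :=
      integrableOn_Ioi_rpow_of_lt (by linarith) one_pos
    refine hpow.mono' hmeas.restrict ?_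
    filter_upwards [ae_restrict_mem measurableSet_Ioi] with t (ht : 1 < t)
    have ht0 : 0 < t := one_pos.trans ht
    rw [norm_of_nonneg (by positivity)]
    calc t ^ (a - 1) * (1 + t) ^ (-(a + b)) ≤ t ^ (a - 1) * t ^ (-(a + b)) := by
          gcongr _ * ?_
          exact rpow_le_rpow_of_nonpos ht0 (by linarith) (by linarith)
      _ = t ^ (-b - 1) := by rw [← rpow_add ht0]; ring_nf
  simpa [Ioc_union_Ioi_eq_Ioi zero_le_one] using near_zero.union near_top

theorem betaSecondKind_pos (ha : 0 < a) (hb : 0 < b) : 0 < betaSecondKind a b := by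
  refine (setIntegral_pos_iff_support_of_nonneg_ae ?_
    (integrableOn_rpow_mul_one_add_rpow_neg ha hb)).mpr ?_
  · filter_upwards [ae_restrict_mem measurableSet_Ioi] with t (ht : 0 < t)
    positivity
  · have : Ioi (0 : ℝ) ⊆ Function.support
        (fun t : ℝ => t ^ (a - 1) * (1 + t) ^ (-(a + b))) ∩ Ioi 0 :=
      fun t (ht : 0 < t) => ⟨by simp only [Function.mem_support]; positivity, ht⟩
    exact (by simp : (0 : ENNReal) < volume (Ioi (0 : ℝ))).trans_le (measure_mono this)

theorem betaSecondKind_add_one (ha : 0 < a) (hb : 0 < b) :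
    betaSecondKind (a + 1) b = a / (a + b) * betaSecondKind a b := by
  set f : ℝ → ℝ := fun t => t ^ a * (1 + t) ^ (-(a + b))
  have hderiv : ∀ t ∈ Ioi (0 : ℝ), HasDerivAt f
      (a * (t ^ (a - 1) * (1 + t) ^ (-(a + b)))
        - (a + b) * (t ^ (a + 1 - 1) * (1 + t) ^ (-(a + 1 + b)))) t := by
    intro t (ht : 0 < t)
    refine ((hasDerivAt_rpow_const (p := a) (Or.inl ht.ne')).mul
      (((hasDerivAt_id t).const_add 1).rpow_const (p := -(a + b))
        (Or.inl (by simp only [id]; linarith)))).congr_deriv ?_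
    rw [add_sub_cancel_right, show -(a + 1 + b) = -(a + b) - 1 by ring]
    simp only [id]
    ring
  have hcont : ContinuousWithinAt f (Ici 0) 0 :=
    ((continuousAt_rpow_const _ _ (Or.inr ha.le)).mul
      ((continuous_const.add continuous_id).continuousAt.rpow_const
        (Or.inl (by norm_num)))).continuousWithinAt
  have hlim : Tendsto f atTop (𝓝 0) := by
    refine squeeze_zero' ?_ ?_ (tendsto_rpow_neg_atTop hb)
    · filter_upwards [eventually_gt_atTop 0] with t ht
      positivity
    · filter_upwards [eventually_gt_atTop 0] with t ht
      calc f t ≤ t ^ a * t ^ (-(a + b)) := by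
            gcongr _ * ?_
            exact rpow_le_rpow_of_nonpos ht (by linarith) (by linarith)
        _ = t ^ (-b) := by rw [← rpow_add ht]; ring_nf
  have h₁ := (integrableOn_rpow_mul_one_add_rpow_neg ha hb).const_mul a
  have h₂ := (integrableOn_rpow_mul_one_add_rpow_neg (by linarith : 0 < a + 1) hb).const_mul (a + b)
  have hftc := integral_Ioi_of_hasDerivAt_of_tendsto hcont hderiv (h₁.sub h₂) hlim
  rw [integral_sub h₁ h₂, integral_const_mul, integral_const_mul] at hftc
  have hf0 : f 0 = 0 := by simp [f, zero_rpow ha.ne']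
  rw [hf0, sub_zero] at hftc
  unfold betaSecondKind
  field_simp
  linarith

end BetaSecondKind

theorem integral_Ioi_rpow_mul_comp_rpow {q : ℝ} (hq : 0 < q) (m : ℝ) (g : ℝ → ℝ) :
    ∫ r in Ioi (0 : ℝ), r ^ m * g (r ^ q)
      = q⁻¹ * ∫ t in Ioi (0 : ℝ), t ^ ((m + 1) / q - 1) * g t := by
  rw [← integral_comp_rpow_Ioi_of_pos (g := fun t => t ^ ((m + 1) / q - 1) * g t) hq,
    ← integral_const_mul]
  refine setIntegral_congr_fun measurableSet_Ioi fun r (hr : 0 < r) => ?_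
  have : (r ^ q) ^ ((m + 1) / q - 1) * r ^ (q - 1) = r ^ m := by
    rw [← rpow_mul hr.le, ← rpow_add hr]
    congr 1
    field_simp
    ring
  simp only [smul_eq_mul]
  rw [← this]
  field_simp

section NormedSpace

variable {E : Type*} [NormedAddCommGroup E] [NormedSpace ℝ E] [Nontrivial E] [FiniteDimensional ℝ E]
  [MeasurableSpace E] [BorelSpace E] (μ : Measure E) [μ.IsAddHaarMeasure] {q : ℝ}

theorem integral_norm_rpow_mul_comp_norm_rpow (hq : 0 < q) (m : ℝ) (g : ℝ → ℝ) :
    ∫ x, ‖x‖ ^ m * g (‖x‖ ^ q) ∂μ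
      = Module.finrank ℝ E * μ.real (Metric.ball 0 1) / q
        * ∫ t in Ioi (0 : ℝ), t ^ ((Module.finrank ℝ E + m) / q - 1) * g t := by
  rw [integral_fun_norm_addHaar μ (fun r => r ^ m * g (r ^ q)), nsmul_eq_mul, smul_eq_mul]
  have : ∫ r in Ioi (0 : ℝ), r ^ (Module.finrank ℝ E - 1) • (r ^ m * g (r ^ q))
      = ∫ r in Ioi (0 : ℝ), r ^ (Module.finrank ℝ E - 1 + m) * g (r ^ q) := by
    refine setIntegral_congr_fun measurableSet_Ioi fun r (hr : 0 < r) => ?_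
    rw [smul_eq_mul, rpow_add hr, ← rpow_natCast, Nat.cast_sub Module.finrank_pos, Nat.cast_one]
    ring
  rw [this, integral_Ioi_rpow_mul_comp_rpow hq]
  ring_nf

theorem integral_sq_one_add_norm_rpow_neg {p : ℝ} (hq : 0 < q) :
    ∫ x, ((1 + ‖x‖ ^ q) ^ (-p)) ^ 2 ∂μ
      = Module.finrank ℝ E * μ.real (Metric.ball 0 1) / q
        * betaSecondKind (Module.finrank ℝ E / q) (2 * p - Module.finrank ℝ E / q) := by
  set d : ℝ := (Module.finrank ℝ E : ℝ)
  have integrand_eq : ∀ x : E, ((1 + ‖x‖ ^ q) ^ (-p)) ^ 2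
      = ‖x‖ ^ (0 : ℝ) * (1 + ‖x‖ ^ q) ^ (-(d / q + (2 * p - d / q))) := fun x => by
    rw [rpow_zero, one_mul, add_sub_cancel, ← rpow_two, ← rpow_mul (by positivity)]
    ring_nf
  rw [funext integrand_eq, integral_norm_rpow_mul_comp_norm_rpow μ hq 0 fun t => (1 + t) ^ _, add_zero]
  rfl

end NormedSpace

section InnerProductSpace

variable {F : Type*} [NormedAddCommGroup F] [InnerProductSpace ℝ F]

theorem HasDerivAt.hasGradientAt_comp_norm_sq [CompleteSpace F] {g : ℝ → ℝ} {g' : ℝ} {x : F}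
    (hg : HasDerivAt g g' (‖x‖ ^ 2)) :
    HasGradientAt (fun y => g (‖y‖ ^ 2)) ((2 * g') • x) x := by
  rw [hasGradientAt_iff_hasFDerivAt]
  refine (hg.comp_hasFDerivAt x (hasStrictFDerivAt_norm_sq x).hasFDerivAt).congr_fderiv ?_
  ext y
  simp
  ring

theorem norm_mul_norm_gradient_one_add_norm_rpow [CompleteSpace F] {p q : ℝ} (hp : 0 ≤ p)
    (hq : 0 < q) (x : F) :
    ‖x‖ * ‖gradient (fun y : F => (1 + ‖y‖ ^ q) ^ (-p)) x‖
      = p * q * ‖x‖ ^ q * (1 + ‖x‖ ^ q) ^ (-(p + 1)) := by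
  rcases eq_or_ne x 0 with rfl | hx
  · simp [zero_rpow hq.ne']
  have sq_rpow : ∀ y : F, (‖y‖ ^ 2) ^ (q / 2) = ‖y‖ ^ q := fun y => by
    rw [← rpow_natCast, ← rpow_mul (norm_nonneg y), Nat.cast_ofNat, mul_div_cancel₀ q two_ne_zero]
  have hu : 0 < ‖x‖ ^ 2 := by positivity
  have hg : HasDerivAt (fun u : ℝ => (1 + u ^ (q / 2)) ^ (-p))
      (-(q / 2 * p) * (‖x‖ ^ 2) ^ (q / 2 - 1) * (1 + ‖x‖ ^ q) ^ (-(p + 1))) (‖x‖ ^ 2) := by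
    refine (((hasDerivAt_rpow_const (Or.inl hu.ne')).const_add 1).rpow_const
      (Or.inl (by positivity))).congr_deriv ?_
    rw [sq_rpow, show -p - 1 = -(p + 1) by ring]
    ring
  have hΦ : (fun y : F => (1 + ‖y‖ ^ q) ^ (-p))
      = fun y => (fun u : ℝ => (1 + u ^ (q / 2)) ^ (-p)) (‖y‖ ^ 2) := by
    simp only [sq_rpow]
  rw [hΦ, hg.hasGradientAt_comp_norm_sq.gradient, norm_smul, rpow_sub_one hu.ne', sq_rpow,
    Real.norm_eq_abs, abs_of_nonpos]
  · field_simp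
  · have : 0 ≤ q / 2 * p * (‖x‖ ^ q / ‖x‖ ^ 2) * (1 + ‖x‖ ^ q) ^ (-(p + 1)) := by positivity
    linarith

variable [FiniteDimensional ℝ F] [Nontrivial F] [MeasurableSpace F] [BorelSpace F]
  (μ : Measure F) [μ.IsAddHaarMeasure] {p q : ℝ}

theorem integral_norm_sq_mul_norm_gradient_sq_one_add_norm_rpow_neg (hp : 0 ≤ p) (hq : 0 < q) :
    ∫ x, ‖x‖ ^ 2 * ‖gradient (fun y : F => (1 + ‖y‖ ^ q) ^ (-p)) x‖ ^ 2 ∂μ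
      = (p * q) ^ 2 * (Module.finrank ℝ F * μ.real (Metric.ball 0 1) / q
        * betaSecondKind (Module.finrank ℝ F / q + 2) (2 * p - Module.finrank ℝ F / q)) := by
  set d : ℝ := (Module.finrank ℝ F : ℝ)
  have integrand_eq : ∀ x : F, ‖x‖ ^ 2 * ‖gradient (fun y : F => (1 + ‖y‖ ^ q) ^ (-p)) x‖ ^ 2
      = (p * q) ^ 2 * (‖x‖ ^ (2 * q) * (1 + ‖x‖ ^ q) ^ (-(d / q + 2 + (2 * p - d / q)))) :=
    fun x => by
      rw [← mul_pow, norm_mul_norm_gradient_one_add_norm_rpow hp hq,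
        show -(d / q + 2 + (2 * p - d / q)) = -(p + 1) * 2 by ring, mul_comm 2 q,
        rpow_mul (norm_nonneg x), rpow_mul (by positivity), rpow_two, rpow_two]
      ring
  rw [funext integrand_eq, integral_const_mul,
    integral_norm_rpow_mul_comp_norm_rpow μ hq (2 * q) fun t => (1 + t) ^ _,
    show (d + 2 * q) / q - 1 = d / q + 2 - 1 by field_simp]
  rfl

theorem integral_norm_sq_mul_norm_gradient_sq_div_integral_sq (hq : 0 < q)
    (hd : Module.finrank ℝ F < 2 * p * q) :
    (∫ x, ‖x‖ ^ 2 * ‖gradient (fun y : F => (1 + ‖y‖ ^ q) ^ (-p)) x‖ ^ 2 ∂μ)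
      / ∫ x, ((1 + ‖x‖ ^ q) ^ (-p)) ^ 2 ∂μ
      = p * Module.finrank ℝ F * (Module.finrank ℝ F + q) / (2 * (2 * p + 1)) := by
  set d : ℝ := (Module.finrank ℝ F : ℝ) with hd_def
  have hd0 : 0 < d := Nat.cast_pos.mpr Module.finrank_pos
  have ha : 0 < d / q := div_pos hd0 hq
  have hb : 0 < 2 * p - d / q := by rw [sub_pos, div_lt_iff₀ hq]; linarith
  have hp : 0 < p := by nlinarith
  have hV : 0 < μ.real (Metric.ball 0 1) :=
    ENNReal.toReal_pos (Metric.measure_ball_pos _ _ one_pos).ne' measure_ball_lt_top.ne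
  have hB := betaSecondKind_pos ha hb
  rw [integral_norm_sq_mul_norm_gradient_sq_one_add_norm_rpow_neg μ hp.le hq,
    integral_sq_one_add_norm_rpow_neg μ hq, ← hd_def, show d / q + 2 = d / q + 1 + 1 by ring,
    betaSecondKind_add_one (by positivity) hb, betaSecondKind_add_one ha hb,
    show d / q + 1 + (2 * p - d / q) = 2 * p + 1 by ring, add_sub_cancel]
  generalize betaSecondKind (d / q) (2 * p - d / q) = B at hB ⊢
  field_simp

end InnerProductSpace

theorem stmt_4 (n : ℕ) (hn : 5 ≤ n) (s : ℝ) (hs : s ∈ Set.Ioo (0:ℝ) 2)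
    (Φ : EuclideanSpace ℝ (Fin n) → ℝ)
    (hΦ : ∀ X, Φ X = (1 + ‖X‖ ^ (2 - s)) ^ (-(((n:ℝ) - 2) / (2 - s)))) :
    (∫ X : EuclideanSpace ℝ (Fin n), ‖X‖ ^ 2 * ‖gradient Φ X‖ ^ 2)
      / (∫ X : EuclideanSpace ℝ (Fin n), (Φ X) ^ 2)
      = (n : ℝ) * ((n:ℝ) - 2) * ((n:ℝ) + 2 - s) / (2 * (2 * (n:ℝ) - 2 - s)) := by
  obtain ⟨-, hs2⟩ := hs
  have hn' : (5 : ℝ) ≤ n := by exact_mod_cast hn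
  have : Nontrivial (EuclideanSpace ℝ (Fin n)) :=
    Module.nontrivial_of_finrank_pos (R := ℝ) (by rw [finrank_euclideanSpace_fin]; omega)
  obtain rfl : Φ = _ := funext hΦ
  rw [integral_norm_sq_mul_norm_gradient_sq_div_integral_sq volume (by linarith)
    (by rw [finrank_euclideanSpace_fin, mul_assoc, div_mul_cancel₀ _ (by linarith)]; linarith),
    finrank_euclideanSpace_fin]
  have : 2 * (n : ℝ) - 2 - s ≠ 0 := by linarith
  field_simp
  ring
end

section
/- Let n ≥ 5 be an integer and s ∈ (0,2). With Φ(X) = (1 + |X|^{2-s})^{-(n-2)/(2-s)} and 2*(s) = 2(n-s)/(n-2), one has ∫_{ℝⁿ} |X|^{2-s} Φ^{2*(s)} dX / ∫_{ℝⁿ} Φ² dX = n(n-4) / (2(n-2)(2n-2-s)). -/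
/-!
With `a = 2 - s` and `c = 2 (n - 2) / a`, polar coordinates turn the numerator and the
denominator into multiples of `I(n + a, c + 2)` and `I(n, c)`, where
`I(b, c) = radialIntegral a b c = ∫₀^∞ r ^ (b - 1) (1 + r ^ a) ^ (-c) dr`.
Integration by parts gives `b I(b, c) = a c I(b + a, c + 1)`, and factoring
`(1 + r ^ a) ^ (-c) = (1 + r ^ a) ^ (-c - 1) (1 + r ^ a)` gives
`I(b, c) = I(b, c + 1) + I(b + a, c + 1)`. Together they express `I(n + a, c + 2)` as an explicit
rational multiple of `I(n, c)`.
-/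

open MeasureTheory Set Real Filter Topology

noncomputable def radialIntegral (a b c : ℝ) : ℝ :=
  ∫ r in Ioi (0 : ℝ), r ^ (b - 1) * (1 + r ^ a) ^ (-c)

section radialIntegral

variable {a b c r : ℝ}

lemma one_add_rpow_rpow_neg_le_one (hr : 0 ≤ r) (hc : 0 ≤ c) : (1 + r ^ a) ^ (-c) ≤ 1 :=
  rpow_le_one_of_one_le_of_nonpos (le_add_of_nonneg_right (rpow_nonneg hr a)) (neg_nonpos.2 hc)

lemma one_add_rpow_rpow_neg_le (hr : 0 < r) (hc : 0 ≤ c) :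
    (1 + r ^ a) ^ (-c) ≤ r ^ (-(a * c)) :=
  calc (1 + r ^ a) ^ (-c) ≤ (r ^ a) ^ (-c) :=
        rpow_le_rpow_of_nonpos (rpow_pos_of_pos hr a) (lt_one_add _).le (neg_nonpos.2 hc)
    _ = r ^ (-(a * c)) := by rw [← rpow_mul hr.le, mul_neg]

lemma continuousOn_radialIntegrand :
    ContinuousOn (fun r : ℝ => r ^ (b - 1) * (1 + r ^ a) ^ (-c)) (Ioi 0) := by
  intro r (hr : 0 < r)
  have : 0 < 1 + r ^ a := by positivity
  refine ContinuousAt.continuousWithinAt ?_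
  fun_prop (disch := first | exact Or.inl hr.ne' | exact Or.inl this.ne')

lemma integrableOn_radialIntegrand (hb : 0 < b) (hc : 0 ≤ c) (hbc : b < a * c) :
    IntegrableOn (fun r : ℝ => r ^ (b - 1) * (1 + r ^ a) ^ (-c)) (Ioi 0) := by
  rw [← Ioc_union_Ioi_eq_Ioi zero_le_one, integrableOn_union]
  constructor
  · have hdom : IntegrableOn (fun r : ℝ => r ^ (b - 1)) (Ioc 0 1) :=
      (intervalIntegrable_iff_integrableOn_Ioc_of_le zero_le_one).1
        (intervalIntegral.intervalIntegrable_rpow' (by linarith))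
    refine hdom.mono'
      ((continuousOn_radialIntegrand.mono Ioc_subset_Ioi_self).aestronglyMeasurable
        measurableSet_Ioc) ((ae_restrict_iff' measurableSet_Ioc).2 (ae_of_all _ fun r hr => ?_))
    have hr0 : 0 < r := hr.1
    rw [norm_of_nonneg (by positivity)]
    exact mul_le_of_le_one_right (by positivity) (one_add_rpow_rpow_neg_le_one hr.1.le hc)
  · have hdom : IntegrableOn (fun r : ℝ => r ^ (b - 1 - a * c)) (Ioi 1) :=
      integrableOn_Ioi_rpow_of_lt (by linarith) one_pos
    refine hdom.mono'
      ((continuousOn_radialIntegrand.mono (Ioi_subset_Ioi zero_le_one)).aestronglyMeasurable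
        measurableSet_Ioi) ((ae_restrict_iff' measurableSet_Ioi).2 (ae_of_all _ fun r hr => ?_))
    have hr0 : 0 < r := zero_lt_one.trans hr
    rw [norm_of_nonneg (by positivity), sub_eq_add_neg _ (a * c), rpow_add hr0]
    exact mul_le_mul_of_nonneg_left (one_add_rpow_rpow_neg_le hr0 hc) (by positivity)

lemma radialIntegral_pos (hb : 0 < b) (hc : 0 ≤ c) (hbc : b < a * c) :
    0 < radialIntegral a b c := by
  refine (setIntegral_pos_iff_support_of_nonneg_ae ?_
    (integrableOn_radialIntegrand hb hc hbc)).2 ?_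
  · exact (ae_restrict_iff' measurableSet_Ioi).2 (ae_of_all _ fun r (hr : 0 < r) => by positivity)
  · have hsupp :
        Ioi 0 ⊆ (Function.support fun r : ℝ => r ^ (b - 1) * (1 + r ^ a) ^ (-c)) ∩ Ioi 0 :=
      fun r (hr : 0 < r) => ⟨(by positivity : 0 < r ^ (b - 1) * (1 + r ^ a) ^ (-c)).ne', hr⟩
    exact (by simp : (0 : ENNReal) < volume (Ioi (0 : ℝ))).trans_le (measure_mono hsupp)

lemma hasDerivAt_rpow_mul_one_add_rpow_rpow (hr : 0 < r) :
    HasDerivAt (fun r : ℝ => r ^ b * (1 + r ^ a) ^ (-c))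
      (b * (r ^ (b - 1) * (1 + r ^ a) ^ (-c))
        - a * c * (r ^ (b + a - 1) * (1 + r ^ a) ^ (-(c + 1)))) r := by
  have h1 : 0 < 1 + r ^ a := by positivity
  have hderiv := (hasDerivAt_rpow_const (p := b) (.inl hr.ne')).mul
    ((hasDerivAt_rpow_const (p := -c) (.inl h1.ne')).comp r
      ((hasDerivAt_rpow_const (p := a) (.inl hr.ne')).const_add 1))
  refine hderiv.congr_deriv ?_
  simp only [Function.comp_apply]
  rw [add_sub_assoc, rpow_add hr, neg_add']
  ring

lemma tendsto_rpow_mul_one_add_rpow_rpow_atTop (hc : 0 ≤ c) (hbc : b < a * c) :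
    Tendsto (fun r : ℝ => r ^ b * (1 + r ^ a) ^ (-c)) atTop (𝓝 0) := by
  refine squeeze_zero' ?_ ?_ (tendsto_rpow_neg_atTop (sub_pos.2 hbc))
  · filter_upwards [eventually_gt_atTop 0] with r hr
    positivity
  · filter_upwards [eventually_gt_atTop 0] with r hr
    calc r ^ b * (1 + r ^ a) ^ (-c) ≤ r ^ b * r ^ (-(a * c)) :=
          mul_le_mul_of_nonneg_left (one_add_rpow_rpow_neg_le hr hc) (by positivity)
      _ = r ^ (-(a * c - b)) := by rw [← rpow_add hr]; ring_nf

lemma mul_radialIntegral (ha : 0 < a) (hb : 0 < b) (hbc : b < a * c) :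
    b * radialIntegral a b c = a * c * radialIntegral a (b + a) (c + 1) := by
  have hc : 0 ≤ c := (pos_of_mul_pos_right (hb.trans hbc) ha.le).le
  have hint := integrableOn_radialIntegrand hb hc hbc
  have hint' := integrableOn_radialIntegrand (a := a) (b := b + a) (c := c + 1)
    (by positivity) (by positivity) (by linarith)
  have hcont : ContinuousWithinAt (fun r : ℝ => r ^ b * (1 + r ^ a) ^ (-c)) (Ici 0) 0 := by
    have h1 : (1 : ℝ) + 0 ^ a ≠ 0 := by rw [zero_rpow ha.ne']; norm_num
    refine ContinuousAt.continuousWithinAt ?_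
    fun_prop (disch := first | exact Or.inr hb.le | exact Or.inr ha.le | exact Or.inl h1)
  have hftc := integral_Ioi_of_hasDerivAt_of_tendsto hcont
    (fun r hr => hasDerivAt_rpow_mul_one_add_rpow_rpow hr)
    ((hint.const_mul b).sub (hint'.const_mul (a * c)))
    (tendsto_rpow_mul_one_add_rpow_rpow_atTop hc hbc)
  rw [integral_sub (hint.const_mul b) (hint'.const_mul (a * c)), integral_const_mul,
    integral_const_mul, zero_rpow hb.ne', zero_mul, sub_zero, sub_eq_zero] at hftc
  simpa only [radialIntegral, add_sub_right_comm] using hftc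

lemma radialIntegral_eq_add (ha : 0 < a) (hb : 0 < b) (hbc : b < a * c) :
    radialIntegral a b c = radialIntegral a b (c + 1) + radialIntegral a (b + a) (c + 1) := by
  have hc : 0 < c := pos_of_mul_pos_right (hb.trans hbc) ha.le
  rw [radialIntegral, radialIntegral, radialIntegral,
    ← integral_add (integrableOn_radialIntegrand hb (by positivity) (by nlinarith))
      (integrableOn_radialIntegrand (by positivity) (by positivity) (by linarith))]
  refine setIntegral_congr_fun measurableSet_Ioi fun r (hr : 0 < r) => ?_
  have h1 : 0 < 1 + r ^ a := by positivity
  rw [add_sub_right_comm, rpow_add hr, neg_add', rpow_sub_one h1.ne']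
  field_simp

lemma radialIntegral_add_one (ha : 0 < a) (hb : 0 < b) (hbc : b < a * c) :
    radialIntegral a b (c + 1) = (1 - b / (a * c)) * radialIntegral a b c := by
  have hc : 0 < c := pos_of_mul_pos_right (hb.trans hbc) ha.le
  have hsplit := radialIntegral_eq_add ha hb hbc
  have hibp := mul_radialIntegral ha hb hbc
  field_simp
  linear_combination hibp - a * c * hsplit

lemma radialIntegral_add_add_two_div (ha : 0 < a) (hb : 0 < b) (hbc : b < a * c) :
    radialIntegral a (b + a) (c + 2) / radialIntegral a b c
      = b * (a * c - b) / (a * c * (a * (c + 1))) := by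
  have hc : 0 < c := pos_of_mul_pos_right (hb.trans hbc) ha.le
  have hibp := mul_radialIntegral ha hb (c := c + 1) (by nlinarith)
  rw [add_assoc, one_add_one_eq_two, radialIntegral_add_one ha hb hbc] at hibp
  rw [div_eq_div_iff (radialIntegral_pos hb hc.le hbc).ne' (by positivity)]
  field_simp at hibp
  linear_combination -hibp

end radialIntegral

lemma integral_norm_rpow_mul_one_add_norm_rpow {n : ℕ} (hn : n ≠ 0) (p a c : ℝ) :
    ∫ X : EuclideanSpace ℝ (Fin n), ‖X‖ ^ p * (1 + ‖X‖ ^ a) ^ (-c)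
      = n * volume.real (Metric.ball (0 : EuclideanSpace ℝ (Fin n)) 1)
        * radialIntegral a (n + p) c := by
  have : Nonempty (Fin n) := ⟨⟨0, Nat.pos_of_ne_zero hn⟩⟩
  rw [integral_fun_norm_addHaar volume (fun r => r ^ p * (1 + r ^ a) ^ (-c)),
    finrank_euclideanSpace_fin, nsmul_eq_mul, smul_eq_mul, mul_assoc, radialIntegral]
  congr 2
  refine setIntegral_congr_fun measurableSet_Ioi fun r (hr : 0 < r) => ?_
  rw [smul_eq_mul, ← rpow_natCast, Nat.cast_pred (Nat.pos_of_ne_zero hn), ← mul_assoc,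
    ← rpow_add hr, sub_add_eq_add_sub]

theorem stmt_5 (n : ℕ) (hn : 5 ≤ n) (s : ℝ) (hs : s ∈ Set.Ioo (0:ℝ) 2)
    (Φ : EuclideanSpace ℝ (Fin n) → ℝ)
    (hΦ : ∀ X, Φ X = (1 + ‖X‖ ^ (2 - s)) ^ (-(((n:ℝ) - 2) / (2 - s)))) :
    (∫ X : EuclideanSpace ℝ (Fin n), ‖X‖ ^ (2 - s) * (Φ X) ^ (2 * ((n:ℝ) - s) / ((n:ℝ) - 2)))
      / (∫ X : EuclideanSpace ℝ (Fin n), (Φ X) ^ 2)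
      = (n : ℝ) * ((n:ℝ) - 4) / (2 * ((n:ℝ) - 2) * (2 * (n:ℝ) - 2 - s)) := by
  obtain ⟨hs0, hs2⟩ := hs
  have hn5 : (5 : ℝ) ≤ n := by exact_mod_cast hn
  have hs2' : 2 - s ≠ 0 := by linarith
  have hn2 : (n : ℝ) - 2 ≠ 0 := by linarith
  obtain ⟨c, hc⟩ : ∃ c, c = 2 * ((n : ℝ) - 2) / (2 - s) := ⟨_, rfl⟩
  have hac : (2 - s) * c = 2 * n - 4 := by rw [hc]; field_simp; ring
  have hnum (X : EuclideanSpace ℝ (Fin n)) :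
      ‖X‖ ^ (2 - s) * Φ X ^ (2 * ((n : ℝ) - s) / (n - 2))
        = ‖X‖ ^ (2 - s) * (1 + ‖X‖ ^ (2 - s)) ^ (-(c + 2)) := by
    rw [hΦ, ← rpow_mul (by positivity), hc]
    congr 2
    field_simp
    ring
  have hden (X : EuclideanSpace ℝ (Fin n)) :
      Φ X ^ 2 = ‖X‖ ^ (0 : ℝ) * (1 + ‖X‖ ^ (2 - s)) ^ (-c) := by
    rw [hΦ, rpow_zero, one_mul, ← rpow_natCast, ← rpow_mul (by positivity), hc]
    congr 1
    field_simp
    ring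
  have hK : (n : ℝ) * volume.real (Metric.ball (0 : EuclideanSpace ℝ (Fin n)) 1) ≠ 0 :=
    mul_ne_zero (by positivity)
      (ENNReal.toReal_pos (Metric.measure_ball_pos volume 0 one_pos).ne' measure_ball_lt_top.ne).ne'
  simp_rw [hnum, hden, integral_norm_rpow_mul_one_add_norm_rpow (by omega : n ≠ 0),
    mul_div_mul_left _ _ hK, add_zero]
  rw [radialIntegral_add_add_two_div (by linarith) (by positivity) (by linarith), mul_add, hac]
  ring
end
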